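/- arXiv:2410.06582 — 4 statements merged into one kernel-verified Lean document; each statement's English description precedes it below -/
import Mathlib

section
/- Let K be a field, let α = (α_i)_{i≥1} and β = (β_i)_{i≥1} be sequences in K, and let z, w ∈ K be such that all the denominators appearing below are nonzero. Define the shifted powers (z|α)^k := ∏_{j=1}^{k} (z - α_j) and (z;β)^k := ∏_{j=1}^{k} (1 - z β_j) for k ≥ 0. Then for every n ≥ 0, (1 - wz) · ∑_{k=0}^{n} (1 - α_{k+1} β_{k+1}) · [(z|α)^k / (z;β)^{k+1}] · [(w|β)^k / (w;α)^{k+1}] = 1 - [(z|α)^{n+1} / (z;β)^{n+1}] · [(w|β)^{n+1} / (w;α)^{n+1}]. -/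
open Finset

/-- The shifted power `(z|γ)^k = ∏_{j=1}^k (z - γ_j)` for `k ≥ 0`. -/
noncomputable def barPow {K : Type*} [Field K] (z : K) (γ : ℕ → K) (k : ℕ) : K :=
  ∏ j ∈ range k, (z - γ (j + 1))

/-- The shifted power `(z;γ)^k = ∏_{j=1}^k (1 - z γ_j)` for `k ≥ 0`. -/
noncomputable def semiPow {K : Type*} [Field K] (z : K) (γ : ℕ → K) (k : ℕ) : K :=
  ∏ j ∈ range k, (1 - z * γ (j + 1))

lemma semiPow_ne_zero {K : Type*} [Field K] {z : K} {γ : ℕ → K}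
    (h : ∀ j, 1 - z * γ j ≠ 0) (k : ℕ) : semiPow z γ k ≠ 0 :=
  prod_ne_zero_iff.2 fun j _ => h (j + 1)

/-- Finite geometric progression formula for shifted powers. -/
theorem stmt_1 {K : Type*} [Field K] (α β : ℕ → K) (z w : K)
    (hzβ : ∀ j, 1 - z * β j ≠ 0) (hwα : ∀ j, 1 - w * α j ≠ 0) (n : ℕ) :
    (1 - w * z) * ∑ k ∈ range (n + 1),
        (1 - α (k + 1) * β (k + 1)) * (barPow z α k / semiPow z β (k + 1)) *
          (barPow w β k / semiPow w α (k + 1)) =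
      1 - (barPow z α (n + 1) / semiPow z β (n + 1)) *
        (barPow w β (n + 1) / semiPow w α (n + 1)) := by
  induction n with
  | zero =>
      have h3 := hzβ 1
      have h4 := hwα 1
      simp only [zero_add, barPow, semiPow, prod_range_succ, prod_range_zero, sum_range_one]
      field_simp
      ring
  | succ n ih =>
      rw [sum_range_succ, mul_add, ih]
      have h1 := semiPow_ne_zero hzβ (n + 1)
      have h2 := semiPow_ne_zero hwα (n + 1)
      have h3 := hzβ (n + 2)
      have h4 := hwα (n + 2)
      have eb : barPow z α (n + 2) = barPow z α (n + 1) * (z - α (n + 2)) := by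
        simp [barPow, prod_range_succ]
      have eb' : barPow w β (n + 2) = barPow w β (n + 1) * (w - β (n + 2)) := by
        simp [barPow, prod_range_succ]
      have es : semiPow z β (n + 2) = semiPow z β (n + 1) * (1 - z * β (n + 2)) := by
        simp [semiPow, prod_range_succ]
      have es' : semiPow w α (n + 2) = semiPow w α (n + 1) * (1 - w * α (n + 2)) := by
        simp [semiPow, prod_range_succ]
      rw [eb, eb', es, es']
      field_simp
      ring
end

section
/- Let n ≥ 1, let K be a commutative ring, and let α_1, …, α_n, β_1, …, β_n ∈ K. Define the n×n matrix M by: M_{j,j} = 1 - α_j β_j for 1 ≤ j ≤ n; M_{j, j+1} = α_j for 1 ≤ j ≤ n-1; M_{i,j} = (-1)^{i-j} (β_j β_{j+1} ⋯ β_{i-1}) (1 - α_i β_i) for i > j; and M_{i,j} = 0 for j > i+1. Then det(M) = 1 - α_n β_n. -/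
/-!
Right-multiplying `M` by the unit lower bidiagonal matrix with subdiagonal `β_1, …, β_{n-1}`
adds `β_j` times column `j + 1` to column `j`. Below the diagonal the signed products
`(-1)^(i-j) β_j ⋯ β_{i-1}` telescope, so these entries cancel, and on the diagonal
`1 - α_j β_j + β_j α_j = 1` except in the last column. The product is therefore upper triangular
with diagonal `1, …, 1, 1 - α_n β_n`, while the bidiagonal factor has determinant `1`.
-/

open Finset Matrix

namespace HessenbergShift

variable {K : Type*} [CommRing K] {n : ℕ}

def signedProd (β : ℕ → K) (j i : ℕ) : K :=
  (-1) ^ (i - j) * ∏ t ∈ Ico j i, β (t + 1)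

@[simp]
lemma signedProd_self (β : ℕ → K) (i : ℕ) : signedProd β i i = 1 := by
  simp [signedProd]

lemma signedProd_of_lt (β : ℕ → K) {j i : ℕ} (h : j < i) :
    signedProd β j i = -(β (j + 1) * signedProd β (j + 1) i) := by
  rw [signedProd, signedProd, prod_eq_prod_Ico_succ_bot h, show i - j = i - (j + 1) + 1 by omega,
    pow_succ]
  ring

def lowerShear (n : ℕ) (β : ℕ → K) : Matrix (Fin n) (Fin n) K :=
  of fun k j => if k = j then 1 else if (k : ℕ) = j + 1 then β (j + 1) else 0

lemma det_lowerShear (β : ℕ → K) : (lowerShear n β).det = 1 := by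
  have hlower : (lowerShear n β).IsLowerTriangular := by
    intro k j (hkj : (k : ℕ) < j)
    simp only [lowerShear, of_apply]
    rw [if_neg (Fin.ne_of_lt hkj), if_neg (by omega)]
  rw [det_of_isLowerTriangular _ hlower]
  simp [lowerShear]

lemma mul_lowerShear_apply_of_val_eq_succ (A : Matrix (Fin n) (Fin n) K) (β : ℕ → K)
    {i j k : Fin n} (hk : (k : ℕ) = j + 1) :
    (A * lowerShear n β) i j = A i j + β (j + 1) * A i k := by
  have hjk : j ≠ k := fun h => by rw [h] at hk; omega
  rw [mul_apply, Fintype.sum_eq_add j k hjk]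
  · simp [lowerShear, hk, hjk.symm, mul_comm]
  · rintro l ⟨hlj, hlk⟩
    have hl : (l : ℕ) ≠ j + 1 := fun h => hlk (Fin.ext (h.trans hk.symm))
    simp [lowerShear, hlj, hl]

lemma mul_lowerShear_apply_of_val_succ_eq (A : Matrix (Fin n) (Fin n) K) (β : ℕ → K)
    {i j : Fin n} (hj : (j : ℕ) + 1 = n) :
    (A * lowerShear n β) i j = A i j := by
  rw [mul_apply, Fintype.sum_eq_single j]
  · simp [lowerShear]
  · intro l hlj
    have hl : (l : ℕ) ≠ j + 1 := by omega
    simp [lowerShear, hlj, hl]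

def hessenberg (n : ℕ) (α β : ℕ → K) : Matrix (Fin n) (Fin n) K :=
  of fun i j =>
    if i = j then 1 - α ((i : ℕ) + 1) * β ((i : ℕ) + 1)
    else if (j : ℕ) = (i : ℕ) + 1 then α ((i : ℕ) + 1)
    else if (j : ℕ) < (i : ℕ) then
      signedProd β j i * (1 - α ((i : ℕ) + 1) * β ((i : ℕ) + 1))
    else 0

lemma hessenberg_apply_of_le (α β : ℕ → K) {i j : Fin n} (h : j ≤ i) :
    hessenberg n α β i j = signedProd β j i * (1 - α ((i : ℕ) + 1) * β ((i : ℕ) + 1)) := by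
  rcases h.lt_or_eq with h | rfl
  · have h' : (j : ℕ) < i := h
    simp only [hessenberg, of_apply]
    rw [if_neg h.ne', if_neg (by omega), if_pos h']
  · simp [hessenberg]

lemma hessenberg_apply_of_val_eq_succ (α β : ℕ → K) {i j : Fin n} (h : (j : ℕ) = i + 1) :
    hessenberg n α β i j = α ((i : ℕ) + 1) := by
  have hij : i ≠ j := fun e => by rw [e] at h; omega
  simp [hessenberg, hij, h]

lemma isUpperTriangular_hessenberg_mul_lowerShear (α β : ℕ → K) :
    (hessenberg n α β * lowerShear n β).IsUpperTriangular := by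
  intro i j (hji : (j : ℕ) < i)
  have hk : (j : ℕ) + 1 < n := by omega
  rw [mul_lowerShear_apply_of_val_eq_succ _ _ (k := ⟨j + 1, hk⟩) rfl,
    hessenberg_apply_of_le _ _ hji.le,
    hessenberg_apply_of_le _ _ (show (j : ℕ) + 1 ≤ i by omega),
    signedProd_of_lt _ hji]
  ring

lemma hessenberg_mul_lowerShear_apply_castSucc {m : ℕ} (α β : ℕ → K) (i : Fin m) :
    (hessenberg (m + 1) α β * lowerShear (m + 1) β) i.castSucc i.castSucc = 1 := by
  rw [mul_lowerShear_apply_of_val_eq_succ _ _ (k := i.succ) rfl,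
    hessenberg_apply_of_le _ _ le_rfl, hessenberg_apply_of_val_eq_succ _ _ rfl]
  simp only [Fin.val_castSucc, signedProd_self]
  ring

lemma hessenberg_mul_lowerShear_apply_last {m : ℕ} (α β : ℕ → K) :
    (hessenberg (m + 1) α β * lowerShear (m + 1) β) (Fin.last m) (Fin.last m) =
      1 - α (m + 1) * β (m + 1) := by
  rw [mul_lowerShear_apply_of_val_succ_eq _ _ rfl, hessenberg_apply_of_le _ _ le_rfl]
  simp

theorem det_hessenberg {m : ℕ} (α β : ℕ → K) :
    (hessenberg (m + 1) α β).det = 1 - α (m + 1) * β (m + 1) := by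
  calc (hessenberg (m + 1) α β).det
        = (hessenberg (m + 1) α β * lowerShear (m + 1) β).det := by
          rw [det_mul, det_lowerShear, mul_one]
    _ = ∏ i, (hessenberg (m + 1) α β * lowerShear (m + 1) β) i i :=
        det_of_isUpperTriangular (isUpperTriangular_hessenberg_mul_lowerShear α β)
    _ = 1 - α (m + 1) * β (m + 1) := by
        rw [Fin.prod_univ_castSucc]
        simp only [hessenberg_mul_lowerShear_apply_castSucc, hessenberg_mul_lowerShear_apply_last,
          prod_const_one, one_mul]

end HessenbergShift

/-- The Hessenberg determinant appearing in the computation of the deformed shift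
operator on the vacuum: with `1`-indexed entries `M_{j,j} = 1 - α_j β_j`,
`M_{j,j+1} = α_j`, `M_{i,j} = (-1)^{i-j} β_j ⋯ β_{i-1} (1 - α_i β_i)` for `i > j`, and
`M_{i,j} = 0` for `j > i + 1`, one has `det M = 1 - α_n β_n`. -/
theorem stmt_8 {K : Type*} [CommRing K] (n : ℕ) (hn : 1 ≤ n) (α β : ℕ → K) :
    (Matrix.of fun i j : Fin n =>
        if i = j then 1 - α ((i : ℕ) + 1) * β ((i : ℕ) + 1)
        else if (j : ℕ) = (i : ℕ) + 1 then α ((i : ℕ) + 1)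
        else if (j : ℕ) < (i : ℕ) then
          (-1 : K) ^ ((i : ℕ) - (j : ℕ)) * (∏ t ∈ Finset.Ico (j : ℕ) (i : ℕ), β (t + 1)) *
            (1 - α ((i : ℕ) + 1) * β ((i : ℕ) + 1))
        else 0).det = 1 - α n * β n := by
  obtain ⟨m, rfl⟩ := Nat.exists_eq_add_of_le' hn
  exact HessenbergShift.det_hessenberg α β
end

section
/- Let K be a field, n ≥ 1, let α, β : ℤ → K, and let z_1, …, z_n ∈ K with all occurring shifted powers defined and nonzero. Then ∑_{ω ∈ S_n} sgn(ω) · ∏_{i=1}^{n} [z_i (z_i|β)^{-ω(i)} / (z_i;α)^{1-ω(i)}] = ∏_{i=1}^{n} [z_i (z_i|β)^{-n}] · ∏_{1 ≤ i < j ≤ n} (z_i - z_j)(1 - α_{1-i} β_{1-j}). -/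
/-- Doubly-indexed shifted power `(z;α)^k`: `(1-zα_1)⋯(1-zα_k)` for `k > 0`, `1` for
`k = 0`, and `[(1-zα_0)(1-zα_{-1})⋯(1-zα_{k+1})]⁻¹` for `k < 0`. -/
noncomputable def cpow {K : Type*} [Field K] (z : K) (α : ℤ → K) (k : ℤ) : K :=
  if 0 ≤ k then ∏ j ∈ Finset.range k.toNat, (1 - z * α ((j : ℤ) + 1))
  else (∏ j ∈ Finset.range (-k).toNat, (1 - z * α (-(j : ℤ))))⁻¹

/-- Doubly-indexed shifted power `(z|β)^k`: `(z-β_1)⋯(z-β_k)` for `k > 0`, `1` for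
`k = 0`, and `[(z-β_0)(z-β_{-1})⋯(z-β_{k+1})]⁻¹` for `k < 0`. -/
noncomputable def ppow {K : Type*} [Field K] (z : K) (β : ℤ → K) (k : ℤ) : K :=
  if 0 ≤ k then ∏ j ∈ Finset.range k.toNat, (z - β ((j : ℤ) + 1))
  else (∏ j ∈ Finset.range (-k).toNat, (z - β (-(j : ℤ))))⁻¹

/-!
With `a l = α (-l)` and `b l = β (-l)`, the `(k, i)` entry of the determinant is
`z_i (z_i|β)^{-n} P_k(z_i)` for the polynomial `P_k = ∏_{k<l<n} (X - b_l) ∏_{l<k} (1 - a_l X)`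
of degree `< n`. Hence the determinant is `∏ z_i (z_i|β)^{-n}` times the Vandermonde determinant
times the determinant of the coefficient matrix of `P_0, …, P_{n-1}`. In the latter, the column
operations `P_{k+1} + a_k P_k = (1 - a_k b_{k+1}) P'_k`, where `P'` is built from `n - 1` and the
shifted sequence `b_{·+1}`, followed by expansion along the last row, in which only the monic `P_0`
of degree `n - 1` has a nonzero entry, reduce `n` to `n - 1` at the cost of the factors
`a_k b_{k+1} - 1`.
-/

open Polynomial Finset

section CoeffMatrix

variable {R : Type*} [CommRing R] {n : ℕ}

def coeffMatrix (p : Fin n → R[X]) : Matrix (Fin n) (Fin n) R :=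
  Matrix.of fun i j => (p j).coeff i

theorem eval_matrix_eq_vandermonde_mul_coeffMatrix (v : Fin n → R) (p : Fin n → R[X])
    (hp : ∀ j, (p j).natDegree < n) :
    Matrix.of (fun i j => (p j).eval (v i)) = Matrix.vandermonde v * coeffMatrix p := by
  ext i j
  rw [Matrix.of_apply, eval_eq_sum_range' (hp j), ← Fin.sum_univ_eq_sum_range, Matrix.mul_apply]
  exact sum_congr rfl fun m _ => mul_comm _ _

theorem det_coeffMatrix_C_mul (c : Fin n → R) (p : Fin n → R[X]) :
    (coeffMatrix fun j => C (c j) * p j).det = (∏ j, c j) * (coeffMatrix p).det := by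
  rw [← Matrix.det_mul_row]
  simp only [coeffMatrix, coeff_C_mul]
  rfl

theorem det_coeffMatrix_cons {m : ℕ} (f : R[X]) (p : Fin m → R[X]) (hf : f.coeff m = 1)
    (hp : ∀ j, (p j).natDegree < m) :
    (coeffMatrix (Fin.cons f p : Fin (m + 1) → R[X])).det = (-1) ^ m * (coeffMatrix p).det := by
  rw [Matrix.det_succ_row _ (Fin.last m), Fin.sum_univ_succ, sum_eq_zero]
  · simp only [coeffMatrix, Matrix.of_apply, Fin.val_last, Fin.val_zero, Fin.cons_zero, hf,
      add_zero, mul_one, Fin.succAbove_last, Fin.succAbove_zero]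
    rfl
  · intro j _
    simp [coeffMatrix, coeff_eq_zero_of_natDegree_lt (hp j)]

end CoeffMatrix

section ShiftedPoly

variable {R : Type*} [CommRing R]

noncomputable def shiftedPoly (n : ℕ) (a b : ℕ → R) (k : ℕ) : R[X] :=
  (∏ l ∈ Ico (k + 1) n, (X - C (b l))) * ∏ l ∈ range k, (1 - C (a l) * X)

theorem eval_shiftedPoly (n : ℕ) (a b : ℕ → R) (k : ℕ) (x : R) :
    (shiftedPoly n a b k).eval x =
      (∏ l ∈ Ico (k + 1) n, (x - b l)) * ∏ l ∈ range k, (1 - a l * x) := by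
  simp [shiftedPoly, eval_prod]

theorem natDegree_shiftedPoly_lt {n k : ℕ} (a b : ℕ → R) (hk : k < n) :
    (shiftedPoly n a b k).natDegree < n := by
  have hfac : ∀ l, (1 - C (a l) * X).natDegree ≤ 1 := fun l => by compute_degree
  have hleft := (natDegree_prod_le (Ico (k + 1) n) fun l => X - C (b l)).trans
    (sum_le_card_nsmul _ _ 1 fun l _ => natDegree_X_sub_C_le (b l))
  have hright := (natDegree_prod_le (range k) fun l => 1 - C (a l) * X).trans
    (sum_le_card_nsmul _ _ 1 fun l _ => hfac l)
  have := natDegree_mul_le.trans (add_le_add hleft hright)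
  simp only [Nat.card_Ico, card_range, smul_eq_mul, mul_one] at this
  unfold shiftedPoly
  omega

theorem coeff_shiftedPoly_zero (n : ℕ) (a b : ℕ → R) :
    (shiftedPoly (n + 1) a b 0).coeff n = 1 := by
  have hmonic : (∏ l ∈ Ico 1 (n + 1), (X - C (b l))).Monic :=
    monic_prod_of_monic _ _ fun l _ => monic_X_sub_C (b l)
  nontriviality R
  have hdeg : (∏ l ∈ Ico 1 (n + 1), (X - C (b l))).natDegree = n := by
    simp [natDegree_prod_of_monic _ _ fun l _ => monic_X_sub_C (b l)]
  simpa [shiftedPoly, hdeg] using hmonic.coeff_natDegree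

theorem shiftedPoly_succ {n k : ℕ} (a b : ℕ → R) (hk : k < n) :
    shiftedPoly (n + 1) a b (k + 1) =
      C (1 - a k * b (k + 1)) * shiftedPoly n a (fun l => b (l + 1)) k +
        C (-a k) * shiftedPoly (n + 1) a b k := by
  have hshift : ∏ l ∈ Ico (k + 1) n, (X - C (b (l + 1))) =
      ∏ l ∈ Ico (k + 2) (n + 1), (X - C (b l)) := by
    simpa using prod_Ico_add' (fun l => X - C (b l)) (k + 1) n 1
  rw [shiftedPoly, shiftedPoly, shiftedPoly, prod_range_succ, hshift,
    prod_eq_prod_Ico_succ_bot (by omega : k + 1 < n + 1)]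
  simp only [map_sub, map_mul, map_one, map_neg]
  ring

theorem det_coeffMatrix_shiftedPoly (n : ℕ) (a b : ℕ → R) :
    (coeffMatrix fun k : Fin n => shiftedPoly n a b k).det =
      ∏ q ∈ range n, ∏ p ∈ range q, (a p * b q - 1) := by
  induction n generalizing b with
  | zero => simp
  | succ m ih =>
    have hcols : (coeffMatrix fun k : Fin (m + 1) => shiftedPoly (m + 1) a b k).det =
        (coeffMatrix (Fin.cons (shiftedPoly (m + 1) a b 0) fun k : Fin m =>
          C (1 - a k * b (k + 1)) * shiftedPoly m a (fun l => b (l + 1)) k)).det := by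
      refine Matrix.det_eq_of_forall_col_eq_smul_add_pred (fun k => -a k) (fun i => rfl)
        fun i k => ?_
      simp [coeffMatrix, shiftedPoly_succ a b k.isLt, coeff_C_mul]
    rw [hcols, det_coeffMatrix_cons _ _ (coeff_shiftedPoly_zero m a b)
      fun k => (natDegree_C_mul_le _ _).trans_lt (natDegree_shiftedPoly_lt a _ k.isLt),
      det_coeffMatrix_C_mul, ih, Fin.prod_univ_eq_prod_range (fun k => 1 - a k * b (k + 1)),
      prod_range_succ', range_zero, prod_empty, mul_one, ← mul_assoc]
    simp only [prod_range_succ (fun p => a p * _ - 1), prod_mul_distrib]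
    have hsign : (-1 : R) ^ m * ∏ k ∈ range m, (1 - a k * b (k + 1)) =
        ∏ k ∈ range m, (a k * b (k + 1) - 1) := by
      rw [← card_range m, ← prod_const, card_range, ← prod_mul_distrib]
      exact prod_congr rfl fun _ _ => by ring
    rw [hsign, mul_comm]

end ShiftedPoly

theorem prod_range_prod_range_eq_prod_Ioi {M : Type*} [CommMonoid M] (n : ℕ)
    (f : ℕ → ℕ → M) :
    ∏ q ∈ range n, ∏ p ∈ range q, f p q = ∏ i : Fin n, ∏ j ∈ Ioi i, f i j := by
  rw [← Fin.prod_univ_eq_prod_range (fun q => ∏ p ∈ range q, f p q),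
    prod_comm' (t' := univ) (s' := fun j => Iio j) (by simp)]
  refine prod_congr rfl fun j _ => ?_
  rw [← Nat.Iio_eq_range, ← Fin.map_valEmbedding_Iio, prod_map]
  rfl

section ShiftedPower

variable {K : Type*} [Field K]

theorem ppow_neg_natCast (z : K) (β : ℤ → K) (k : ℕ) :
    ppow z β (-k) = (∏ j ∈ range k, (z - β (-j)))⁻¹ := by
  rcases k with _ | k
  · simp [ppow]
  · rw [ppow, if_neg (by omega)]
    simp

theorem cpow_neg_natCast (z : K) (α : ℤ → K) (k : ℕ) :
    cpow z α (-k) = (∏ j ∈ range k, (1 - z * α (-j)))⁻¹ := by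
  rcases k with _ | k
  · simp [cpow]
  · rw [cpow, if_neg (by omega)]
    simp

theorem ppow_div_cpow_eq_mul_eval_shiftedPoly {n k : ℕ} (z : K) (α β : ℤ → K)
    (hz : ∀ j, z - β j ≠ 0) (hk : k < n) :
    ppow z β (-((k : ℤ) + 1)) / cpow z α (1 - ((k : ℤ) + 1)) =
      ppow z β (-n) * (shiftedPoly n (fun l => α (-l)) (fun l => β (-l)) k).eval z := by
  have hsplit := prod_range_mul_prod_Ico (fun j => z - β (-j)) (Nat.succ_le_of_lt hk)
  have hIco : ∏ j ∈ Ico (k + 1) n, (z - β (-j)) ≠ 0 := prod_ne_zero_iff.mpr fun j _ => hz _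
  rw [show (1 : ℤ) - (k + 1) = -k by ring, ← Nat.cast_succ, ppow_neg_natCast, cpow_neg_natCast,
    ppow_neg_natCast, ← hsplit, eval_shiftedPoly, div_inv_eq_mul, mul_inv]
  field_simp

end ShiftedPower

theorem stmt_10_general {K : Type*} [Field K] (n : ℕ) (α β : ℤ → K) (z : Fin n → K)
    (hβ : ∀ i j, z i - β j ≠ 0) :
    ∑ ω : Equiv.Perm (Fin n), ((Equiv.Perm.sign ω : ℤ) : K) *
        ∏ i, (z i * ppow (z i) β (-(((ω i : ℕ) : ℤ) + 1)) /
          cpow (z i) α (1 - (((ω i : ℕ) : ℤ) + 1))) =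
      (∏ i, z i * ppow (z i) β (-(n : ℤ))) *
        ∏ i, ∏ j ∈ Finset.Ioi i, (z i - z j) *
          (1 - α (1 - (((i : ℕ) : ℤ) + 1)) * β (1 - (((j : ℕ) : ℤ) + 1))) := by
  set P : Fin n → K[X] := fun k => shiftedPoly n (fun l => α (-l)) (fun l => β (-l)) k
  have hentry : ∀ k i : Fin n,
      z i * ppow (z i) β (-(((k : ℕ) : ℤ) + 1)) / cpow (z i) α (1 - (((k : ℕ) : ℤ) + 1)) =
        z i * ppow (z i) β (-n) * (P k).eval (z i) := fun k i => by
    rw [mul_div_assoc, ppow_div_cpow_eq_mul_eval_shiftedPoly _ _ _ (hβ i) k.isLt, mul_assoc]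
  calc
    _ = (Matrix.of fun k i => z i * ppow (z i) β (-n) *
          (Matrix.of fun i k => (P k).eval (z i)).transpose k i).det := by
      simp only [Matrix.det_apply', Matrix.of_apply, Matrix.transpose_apply, hentry]
    _ = (∏ i, z i * ppow (z i) β (-n)) * (Matrix.vandermonde z * coeffMatrix P).det := by
      rw [Matrix.det_mul_row, Matrix.det_transpose, eval_matrix_eq_vandermonde_mul_coeffMatrix z P
        fun k => natDegree_shiftedPoly_lt _ _ k.isLt]
    _ = _ := by
      rw [Matrix.det_mul, Matrix.det_vandermonde, det_coeffMatrix_shiftedPoly,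
        prod_range_prod_range_eq_prod_Ioi, ← prod_mul_distrib]
      refine congrArg _ (prod_congr rfl fun i _ => ?_)
      rw [← prod_mul_distrib]
      refine prod_congr rfl fun j _ => ?_
      simp only [show ∀ m : ℤ, 1 - (m + 1) = -m from fun m => by ring]
      ring

/-- The shifted-power Vandermonde determinant evaluation:
`∑_{ω ∈ S_n} sgn(ω) ∏_i z_i (z_i|β)^{-ω(i)}/(z_i;α)^{1-ω(i)}
  = ∏_i z_i (z_i|β)^{-n} · ∏_{i<j} (z_i - z_j)(1 - α_{1-i} β_{1-j})`
(indices `1`-indexed: `ω(i) = (ω i : ℕ) + 1`, etc.). -/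
theorem stmt_10 {K : Type*} [Field K] (n : ℕ) (hn : 1 ≤ n) (α β : ℤ → K) (z : Fin n → K)
    (hβ : ∀ i j, z i - β j ≠ 0) (hα : ∀ i j, 1 - z i * α j ≠ 0) :
    ∑ ω : Equiv.Perm (Fin n), ((Equiv.Perm.sign ω : ℤ) : K) *
        ∏ i, (z i * ppow (z i) β (-(((ω i : ℕ) : ℤ) + 1)) /
          cpow (z i) α (1 - (((ω i : ℕ) : ℤ) + 1))) =
      (∏ i, z i * ppow (z i) β (-(n : ℤ))) *
        ∏ i, ∏ j ∈ Finset.Ioi i, (z i - z j) *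
          (1 - α (1 - (((i : ℕ) : ℤ) + 1)) * β (1 - (((j : ℕ) : ℤ) + 1))) :=
  stmt_10_general n α β z hβ
end

section
/- Let p < q be integers, k, ℓ ≥ 1 with k + ℓ ≤ q - p, and let α be a family of commuting indeterminates indexed by ℤ. Then ∑_{j=p}^{q} e_{j-p-k}(-α_{p+1}, …, -α_{j-1}) · e_{q-j-ℓ}(-α_{j+1}, …, -α_{q-1}) = e_{q-p-k-ℓ}(-α_{p+1}, …, -α_{q-1}), where e_r denotes the r-th elementary symmetric polynomial (equal to 0 for r < 0 or r exceeding the number of variables, and e_0 = 1). -/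
/-- The elementary symmetric polynomial `e_r` evaluated at the values of `f` on the
finite set `s` of integer indices. -/
noncomputable def esymZ {K : Type*} [CommRing K] (f : ℤ → K) (s : Finset ℤ) (r : ℕ) : K :=
  ∑ t ∈ s.powersetCard r, ∏ x ∈ t, f x

/-!
Extend `e_r` by `0` to negative degrees `r`. The identity then holds for all `k, l ≥ 0` and all
`p, q`, and is proved by induction on `q`. For `l = 0` only the summand `j = q` survives, since
`e_{q-j}` of the `q - j - 1` variables strictly between `j` and `q` vanishes. For `l + 1`, Pascal's
rule `e_r(S ∪ {α_q}) = e_r(S) + α_q e_{r-1}(S)`, applied to the right factor of every summand and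
to the right-hand side, expresses the case `(q + 1, l + 1)` through `(q, l)` and `(q, l + 1)`.
-/

open Finset

section

variable {K : Type*} [CommRing K] (f : ℤ → K)

theorem esymZ_insert_succ {a : ℤ} {s : Finset ℤ} (h : a ∉ s) (r : ℕ) :
    esymZ f (insert a s) (r + 1) = esymZ f s (r + 1) + f a * esymZ f s r := by
  simp only [esymZ, ← esymm_map_val, insert_val_of_notMem h, Multiset.map_cons,
    Multiset.esymm, Multiset.powersetCard_cons, Multiset.map_add, Multiset.sum_add,
    Multiset.map_map, Function.comp_def, Multiset.prod_cons, Multiset.sum_map_mul_left]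

noncomputable def esymInt (s : Finset ℤ) (r : ℤ) : K :=
  if 0 ≤ r then esymZ f s r.toNat else 0

theorem esymInt_of_neg (s : Finset ℤ) {r : ℤ} (hr : r < 0) : esymInt f s r = 0 :=
  if_neg (by omega)

theorem esymInt_of_card_lt {s : Finset ℤ} {r : ℤ} (hr : #s < r) : esymInt f s r = 0 := by
  rw [esymInt, if_pos (by omega), esymZ, powersetCard_eq_empty.2 (by omega), sum_empty]

theorem esymInt_insert {a : ℤ} {s : Finset ℤ} (h : a ∉ s) (r : ℤ) :
    esymInt f (insert a s) r = esymInt f s r + f a * esymInt f s (r - 1) := by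
  rcases lt_trichotomy r 0 with hr | rfl | hr
  · rw [esymInt_of_neg f _ hr, esymInt_of_neg f _ hr, esymInt_of_neg f _ (by omega), mul_zero,
      add_zero]
  · simp [esymInt, esymZ]
  · obtain ⟨n, rfl⟩ : ∃ n : ℕ, r = n + 1 := ⟨r.toNat - 1, by omega⟩
    simp only [esymInt, if_pos (by omega : (0 : ℤ) ≤ n + 1), add_sub_cancel_right,
      Int.toNat_natCast]
    exact esymZ_insert_succ f h n

/-- For `a = b` the point `b` is not in `Ioo a (b + 1) = ∅`; the bound on `r` rescues the rule. -/
theorem esymInt_Ioo_add_one {a b r : ℤ} (hr : r ≤ b - a) :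
    esymInt f (Ioo a (b + 1)) r = esymInt f (Ioo a b) r + f b * esymInt f (Ioo a b) (r - 1) := by
  rcases lt_or_ge a b with hab | hab
  · rw [Ioo_add_one_right_eq_Ioc, ← Ioo_insert_right hab, esymInt_insert f (by simp)]
  · rw [Ioo_add_one_right_eq_Ioc, Ioc_eq_empty_of_le hab, Ioo_eq_empty_of_le hab,
      esymInt_of_neg f ∅ (by omega : r - 1 < 0), mul_zero, add_zero]

noncomputable def esymConv (p q k l : ℤ) : K :=
  ∑ j ∈ Icc p q, esymInt f (Ioo p j) (j - p - k) * esymInt f (Ioo j q) (q - j - l)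

theorem esymConv_zero_right {p q : ℤ} (hpq : p ≤ q) (k : ℤ) :
    esymConv f p q k 0 = esymInt f (Ioo p q) (q - p - k) := by
  rw [esymConv, sum_eq_single_of_mem q (by simp [hpq])]
  · simp [esymInt, esymZ]
  · intro j hj hjq
    rw [mem_Icc] at hj
    rw [esymInt_of_card_lt f (s := Ioo j q) (by rw [Int.card_Ioo]; omega), mul_zero]

theorem esymConv_add_one {l : ℤ} (hl : 0 ≤ l) (p q k : ℤ) :
    esymConv f p (q + 1) k (l + 1) = esymConv f p q k l + f q * esymConv f p q k (l + 1) := by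
  have hsub : Icc p q ⊆ Icc p (q + 1) := Icc_subset_Icc_right (by omega)
  have hvanish : ∀ m, 0 ≤ m → ∀ j ∈ Icc p (q + 1), j ∉ Icc p q →
      esymInt f (Ioo p j) (j - p - k) * esymInt f (Ioo j q) (q - j - m) = 0 := by
    intro m hm j hj hj'
    simp only [mem_Icc] at hj hj'
    rw [esymInt_of_neg f (Ioo j q) (by omega), mul_zero]
  rw [esymConv, esymConv, esymConv, sum_subset hsub (hvanish l hl),
    sum_subset hsub (hvanish (l + 1) (by omega)), mul_sum, ← sum_add_distrib]
  refine sum_congr rfl fun j _ => ?_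
  rw [show q + 1 - j - (l + 1) = q - j - l by ring, esymInt_Ioo_add_one f (by omega),
    show q - j - l - 1 = q - j - (l + 1) by ring]
  ring

theorem esymConv_of_lt {p q : ℤ} (hqp : q < p) (k l : ℤ) : esymConv f p q k l = 0 := by
  rw [esymConv, Icc_eq_empty (by omega), sum_empty]

theorem esymConv_eq {k l : ℤ} (hk : 0 ≤ k) (hl : 0 ≤ l) (p q : ℤ) :
    esymConv f p q k l = esymInt f (Ioo p q) (q - p - k - l) := by
  rcases lt_or_ge q (p - 1) with hq | hq
  · rw [esymConv_of_lt f (by omega), esymInt_of_neg f _ (by omega)]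
  induction q, hq using Int.leInduction generalizing l with
  | base => rw [esymConv_of_lt f (by omega), esymInt_of_neg f _ (by omega)]
  | succ q hq ih =>
    rcases hl.eq_or_lt with rfl | hl
    · rw [esymConv_zero_right f (by omega), sub_zero]
    obtain ⟨l, rfl⟩ : ∃ l', l = l' + 1 := ⟨l - 1, by ring⟩
    rw [esymConv_add_one f (by omega), ih (by omega), ih hl.le,
      show q + 1 - p - k - (l + 1) = q - p - k - l by ring, esymInt_Ioo_add_one f (by omega),
      show q - p - k - l - 1 = q - p - k - (l + 1) by ring]

end

theorem stmt_13_general {K : Type*} [CommRing K] (α : ℤ → K) (p q k l : ℤ)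
    (hk : 1 ≤ k) (hl : 1 ≤ l) (hkl : k + l ≤ q - p) :
    ∑ j ∈ Finset.Icc p q,
        (if 0 ≤ j - p - k ∧ 0 ≤ q - j - l then
          esymZ (fun i => -α i) (Finset.Ioo p j) (j - p - k).toNat *
            esymZ (fun i => -α i) (Finset.Ioo j q) (q - j - l).toNat
        else 0) =
      esymZ (fun i => -α i) (Finset.Ioo p q) (q - p - k - l).toNat := by
  have h := esymConv_eq (fun i => -α i) (by omega : 0 ≤ k) (by omega : 0 ≤ l) p q
  simp only [esymConv, esymInt, ite_zero_mul_ite_zero] at h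
  rwa [if_pos (by omega)] at h

/-- The `β = 0` specialization of the convolution identity for deformed current
coefficient matrices: for `p < q`, `k, ℓ ≥ 1` with `k + ℓ ≤ q - p`,
`∑_{j=p}^{q} e_{j-p-k}(-α_{p+1},…,-α_{j-1}) e_{q-j-ℓ}(-α_{j+1},…,-α_{q-1})
  = e_{q-p-k-ℓ}(-α_{p+1},…,-α_{q-1})` (with `e` of negative index equal to `0`). -/
theorem stmt_13 {K : Type*} [CommRing K] (α : ℤ → K) (p q k l : ℤ)
    (hpq : p < q) (hk : 1 ≤ k) (hl : 1 ≤ l) (hkl : k + l ≤ q - p) :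
    ∑ j ∈ Finset.Icc p q,
        (if 0 ≤ j - p - k ∧ 0 ≤ q - j - l then
          esymZ (fun i => -α i) (Finset.Ioo p j) (j - p - k).toNat *
            esymZ (fun i => -α i) (Finset.Ioo j q) (q - j - l).toNat
        else 0) =
      esymZ (fun i => -α i) (Finset.Ioo p q) (q - p - k - l).toNat :=
  stmt_13_general α p q k l hk hl hkl
end
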